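/- arXiv:1604.07651 — 4 statements merged into one kernel-verified Lean document; each statement's English description precedes it below -/
import Mathlib

section
/- Let θ, θ' ∈ (−π/2, π/2) and ρ, ρ' ∈ ℝ, and set (s,y) = (e^{ρ'} cos θ', e^{ρ'} sin θ') (log-polar coordinates). Then the incidence relation s·cos θ + y·sin θ = e^ρ holds if and only if cos(θ − θ') = e^{ρ − ρ'}. Moreover, if cos θ ≠ 0 and one sets τ² = e^ρ / cos θ and q² = −tan θ, then s·cos θ + y·sin θ = e^ρ is equivalent to s = τ² + q² y; that is, the straight line s = τ² + q² y in the (s,y)-plane corresponds in log-polar coordinates (θ',ρ') exactly to the shift-invariant curve cos(θ − θ') = e^{ρ − ρ'}. -/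
open Real

/-! The incidence expression `s cos θ + y sin θ` is the inner product of `(s, y)` with the unit
vector at angle `θ`; in polar form it is `e^{ρ'} cos (θ - θ')`, which gives the first equivalence.
Dividing the incidence relation by `cos θ` solves it for `s`, which gives the second. -/

theorem polar_mul_cos_add_mul_sin (r θ θ' : ℝ) :
    r * cos θ' * cos θ + r * sin θ' * sin θ = r * cos (θ - θ') := by
  rw [cos_sub]; ring

theorem mul_add_mul_eq_iff_eq_div_add {K : Type*} [Field K] {a b c s y : K} (ha : a ≠ 0) :
    s * a + y * b = c ↔ s = c / a + -(b / a) * y := by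
  rw [neg_mul, ← sub_eq_add_neg, div_mul_eq_mul_div, div_sub_div_same, eq_div_iff ha,
    eq_sub_iff_add_eq, mul_comm b]

theorem logpolar_line_incidence_general (θ θ' ρ ρ' : ℝ)
    (s y : ℝ) (hs : s = Real.exp ρ' * Real.cos θ') (hy : y = Real.exp ρ' * Real.sin θ') :
    (s * Real.cos θ + y * Real.sin θ = Real.exp ρ ↔
      Real.cos (θ - θ') = Real.exp (ρ - ρ')) ∧
    (Real.cos θ ≠ 0 →
      ∀ τsq qsq : ℝ, τsq = Real.exp ρ / Real.cos θ → qsq = -Real.tan θ →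
        (s * Real.cos θ + y * Real.sin θ = Real.exp ρ ↔ s = τsq + qsq * y)) := by
  constructor
  · rw [hs, hy, polar_mul_cos_add_mul_sin, exp_sub, eq_div_iff (exp_ne_zero ρ'), mul_comm]
  · rintro hcos τsq qsq rfl rfl
    rw [tan_eq_sin_div_cos]
    exact mul_add_mul_eq_iff_eq_div_add hcos

/-- In log-polar coordinates `(s,y) = (e^{ρ'} cos θ', e^{ρ'} sin θ')`, the incidence
relation `s cos θ + y sin θ = e^ρ` is equivalent to `cos (θ - θ') = e^{ρ - ρ'}`, and,
with `τ² = e^ρ / cos θ`, `q² = -tan θ`, it is equivalent to `s = τ² + q² y`. -/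
theorem logpolar_line_incidence (θ θ' ρ ρ' : ℝ)
    (hθ : θ ∈ Set.Ioo (-(π / 2)) (π / 2)) (hθ' : θ' ∈ Set.Ioo (-(π / 2)) (π / 2))
    (s y : ℝ) (hs : s = Real.exp ρ' * Real.cos θ') (hy : y = Real.exp ρ' * Real.sin θ') :
    (s * Real.cos θ + y * Real.sin θ = Real.exp ρ ↔
      Real.cos (θ - θ') = Real.exp (ρ - ρ')) ∧
    (Real.cos θ ≠ 0 →
      ∀ τsq qsq : ℝ, τsq = Real.exp ρ / Real.cos θ → qsq = -Real.tan θ →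
        (s * Real.cos θ + y * Real.sin θ = Real.exp ρ ↔ s = τsq + qsq * y)) :=
  logpolar_line_incidence_general θ θ' ρ ρ' s y hs hy
end

section
/- Let K : ℝ^N → ℝ^M be a linear map, f ∈ ℝ^M, μ > 0, and c > 0 with c‖K‖ < 1 (operator norm with respect to Euclidean norms). Then g* ∈ ℝ^N is a minimizer of the functional F(g) = ‖K g − f‖₂² + μ‖g‖₁ (where ‖g‖₁ = Σ_i |g_i|) if and only if g* is a fixed point of the iteration map, i.e., g* = 𝐒_{c²μ}(g* + c² K^T (f − K g*)), where 𝐒_λ denotes componentwise soft-thresholding with parameter λ. -/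
/-!
The functional is the quadratic `‖K g - f‖²` plus the convex function `μ ‖g‖₁`, so `g₀` minimizes
it exactly when `2 Kᵀ (f - K g₀)` is a subgradient of `μ ‖·‖₁` at `g₀`: moving from `g₀` a step
`t` towards `g` changes the quadratic by `-2 t ⟪f - K g₀, K (g - g₀)⟫ + O(t²)`. The
subdifferential of `μ ‖·‖₁` is the product of those of `μ |·|`, and `v ∈ ∂(μ |·|)(y)` means
`|v| ≤ μ ∧ v y = μ |y|`. Soft-thresholding is the proximal map of `(λ / 2) |·|`, so for every
`b > 0` the fixed-point equation `y = S_{bμ}(y + (b / 2) v)` says precisely `v ∈ ∂(μ |·|)(y)`.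
-/

open Set Filter Topology
open scoped RealInnerProductSpace

noncomputable def softThreshold (μ v : ℝ) : ℝ :=
  if v ≤ -μ / 2 then v + μ / 2 else if v < μ / 2 then 0 else v - μ / 2

lemma nonneg_of_forall_mem_Ioo_mul_sq_add_mul_nonneg {a b : ℝ}
    (h : ∀ t ∈ Ioo (0 : ℝ) 1, 0 ≤ a * t ^ 2 + b * t) : 0 ≤ b := by
  have hlim : Tendsto (fun t => a * t + b) (𝓝[>] 0) (𝓝 b) := by
    have hcont : Continuous fun t : ℝ => a * t + b := by fun_prop
    simpa using (hcont.tendsto 0).mono_left nhdsWithin_le_nhds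
  refine ge_of_tendsto hlim ?_
  filter_upwards [Ioo_mem_nhdsGT one_pos] with t ht
  exact nonneg_of_mul_nonneg_right ((h t ht).trans_eq (by ring)) ht.1

lemma forall_mul_abs_add_mul_sub_le_iff {a y v : ℝ} (ha : 0 ≤ a) :
    (∀ x, a * |y| + v * (x - y) ≤ a * |x|) ↔ |v| ≤ a ∧ v * y = a * |y| := by
  constructor
  · intro h
    have h₁ := (h (y + 1)).trans (mul_le_mul_of_nonneg_left (abs_add_le y 1) ha)
    have h₂ := (h (y - 1)).trans (mul_le_mul_of_nonneg_left (abs_sub y 1) ha)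
    have h₃ := h 0
    have h₄ := h (2 * y)
    rw [abs_mul, abs_two] at h₄
    norm_num at h₁ h₂ h₃
    exact ⟨abs_le.mpr ⟨by linarith, by linarith⟩, by linarith⟩
  · rintro ⟨hv, hvy⟩ x
    calc a * |y| + v * (x - y) = v * x := by linarith
      _ ≤ |v| * |x| := by rw [← abs_mul]; exact le_abs_self _
      _ ≤ a * |x| := mul_le_mul_of_nonneg_right hv (abs_nonneg x)

lemma forall_sum_nonneg_iff_of_eq_zero {ι α M : Type*} [Fintype ι]
    [AddCommMonoid M] [PartialOrder M] [IsOrderedAddMonoid M] {h : ι → α → M} {y : ι → α}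
    (hy : ∀ i, h i (y i) = 0) : (∀ x : ι → α, 0 ≤ ∑ i, h i (x i)) ↔ ∀ i t, 0 ≤ h i t := by
  classical
  refine ⟨fun hx i t => ?_, fun hit x => Finset.sum_nonneg fun i _ => hit i (x i)⟩
  have hsingle : ∑ j, h j (Function.update y i t j) = h i t := by
    rw [Finset.sum_eq_single i (fun j _ hj => by rw [Function.update_of_ne hj, hy]) (by simp),
      Function.update_self]
  exact hsingle ▸ hx (Function.update y i t)

lemma forall_mul_sum_abs_add_sum_le_iff {ι : Type*} [Fintype ι] {a : ℝ} (ha : 0 ≤ a)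
    {y v : ι → ℝ} :
    (∀ x : ι → ℝ, a * ∑ i, |y i| + ∑ i, v i * (x i - y i) ≤ a * ∑ i, |x i|) ↔
      ∀ i, |v i| ≤ a ∧ v i * y i = a * |y i| :=
  calc (∀ x : ι → ℝ, a * ∑ i, |y i| + ∑ i, v i * (x i - y i) ≤ a * ∑ i, |x i|) ↔
        ∀ x : ι → ℝ, 0 ≤ ∑ i, (a * |x i| - (a * |y i| + v i * (x i - y i))) :=
      forall_congr' fun x => by
        rw [Finset.sum_sub_distrib, Finset.sum_add_distrib, ← Finset.mul_sum, ← Finset.mul_sum,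
          sub_nonneg]
    _ ↔ ∀ i t, 0 ≤ a * |t| - (a * |y i| + v i * (t - y i)) :=
      forall_sum_nonneg_iff_of_eq_zero (h := fun i t => a * |t| - (a * |y i| + v i * (t - y i)))
        fun i => by ring
    _ ↔ ∀ i, |v i| ≤ a ∧ v i * y i = a * |y i| := by
      simp only [sub_nonneg, forall_mul_abs_add_mul_sub_le_iff ha]

lemma convexOn_sum_abs (ι : Type*) [Fintype ι] :
    ConvexOn ℝ univ fun x : ι → ℝ => ∑ i, |x i| := by
  refine ⟨convex_univ, fun x _ y _ a b ha hb _ => ?_⟩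
  simp only [Pi.add_apply, Pi.smul_apply, smul_eq_mul, Finset.mul_sum, ← Finset.sum_add_distrib]
  gcongr with i
  calc |a * x i + b * y i| ≤ |a * x i| + |b * y i| := abs_add_le _ _
    _ = a * |x i| + b * |y i| := by rw [abs_mul, abs_mul, abs_of_nonneg ha, abs_of_nonneg hb]

section

variable {E F : Type*} [AddCommGroup E] [Module ℝ E] [NormedAddCommGroup F]
  [InnerProductSpace ℝ F]

lemma norm_map_sub_sq_eq (K : E →ₗ[ℝ] F) (f : F) (g₀ g : E) :
    ‖K g - f‖ ^ 2 = ‖K g₀ - f‖ ^ 2 - 2 * ⟪f - K g₀, K (g - g₀)⟫ + ‖K (g - g₀)‖ ^ 2 := by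
  rw [show K g - f = (K g₀ - f) + K (g - g₀) by rw [map_sub]; abel, norm_add_sq_real,
    ← neg_sub f, inner_neg_left]
  ring

theorem forall_sq_norm_map_sub_add_le_iff {φ : E → ℝ} (hφ : ConvexOn ℝ univ φ)
    (K : E →ₗ[ℝ] F) (f : F) (g₀ : E) :
    (∀ g, ‖K g₀ - f‖ ^ 2 + φ g₀ ≤ ‖K g - f‖ ^ 2 + φ g) ↔
      ∀ g, φ g₀ + 2 * ⟪f - K g₀, K (g - g₀)⟫ ≤ φ g := by
  refine ⟨fun hmin g => ?_, fun hsub g => ?_⟩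
  · have hsegment : ∀ t ∈ Ioo (0 : ℝ) 1,
        0 ≤ ‖K (g - g₀)‖ ^ 2 * t ^ 2 + (φ g - φ g₀ - 2 * ⟪f - K g₀, K (g - g₀)⟫) * t := by
      intro t ht
      have hchord : φ (g₀ + t • (g - g₀)) ≤ (1 - t) * φ g₀ + t * φ g := by
        have := hφ.2 (mem_univ g₀) (mem_univ g) (by linarith [ht.2]) ht.1.le (sub_add_cancel 1 t)
        rwa [show (1 - t) • g₀ + t • g = g₀ + t • (g - g₀) by module] at this
      have hmin_t := hmin (g₀ + t • (g - g₀))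
      rw [norm_map_sub_sq_eq K f g₀ (g₀ + t • (g - g₀)), add_sub_cancel_left, map_smul,
        inner_smul_right, norm_smul, Real.norm_eq_abs, mul_pow, sq_abs] at hmin_t
      nlinarith
    linarith [nonneg_of_forall_mem_Ioo_mul_sq_add_mul_nonneg hsegment]
  · rw [norm_map_sub_sq_eq K f g₀ g]
    nlinarith [hsub g, sq_nonneg ‖K (g - g₀)‖]

end

lemma eq_softThreshold_add_iff {lam y w : ℝ} (hlam : 0 ≤ lam) :
    y = softThreshold lam (y + w) ↔ |w| ≤ lam / 2 ∧ w * y = lam / 2 * |y| := by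
  unfold softThreshold
  rcases lt_trichotomy y 0 with hy | rfl | hy
  · have hcond : |w| ≤ lam / 2 ∧ w * y = lam / 2 * |y| ↔ w = -(lam / 2) := by
      rw [abs_of_neg hy, mul_neg, ← neg_mul, mul_left_inj' hy.ne, abs_le]
      exact ⟨And.right, fun h => ⟨⟨h.ge, by linarith⟩, h⟩⟩
    rw [hcond]
    split_ifs <;> grind
  · simp only [mul_zero, abs_zero, zero_add, and_true, abs_le]
    split_ifs <;> grind
  · have hcond : |w| ≤ lam / 2 ∧ w * y = lam / 2 * |y| ↔ w = lam / 2 := by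
      rw [abs_of_pos hy, mul_left_inj' hy.ne', abs_le]
      exact ⟨And.right, fun h => ⟨⟨by linarith, h.le⟩, h⟩⟩
    rw [hcond]
    split_ifs <;> grind

lemma eq_softThreshold_mul_add_mul_iff {a b y v : ℝ} (ha : 0 ≤ a) (hb : 0 < b) :
    y = softThreshold (b * a) (y + b / 2 * v) ↔ |v| ≤ a ∧ v * y = a * |y| := by
  have hb2 : 0 < b / 2 := half_pos hb
  rw [eq_softThreshold_add_iff (by positivity), abs_mul, abs_of_pos hb2,
    show b * a / 2 = b / 2 * a by ring, mul_le_mul_iff_right₀ hb2, mul_assoc, mul_assoc,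
    mul_right_inj' hb2.ne']

theorem minimizer_iff_fixed_point_general (N M : ℕ)
    (K : EuclideanSpace ℝ (Fin N) →L[ℝ] EuclideanSpace ℝ (Fin M))
    (f : EuclideanSpace ℝ (Fin M)) (μ c : ℝ) (hμ : 0 < μ) (hc : 0 < c)
    (g₀ : EuclideanSpace ℝ (Fin N)) :
    (∀ g : EuclideanSpace ℝ (Fin N),
        ‖K g₀ - f‖ ^ 2 + μ * ∑ i, |g₀ i| ≤ ‖K g - f‖ ^ 2 + μ * ∑ i, |g i|) ↔
      g₀ = (show EuclideanSpace ℝ (Fin N) from WithLp.toLp 2 fun i =>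
        softThreshold (c ^ 2 * μ)
          ((g₀ + c ^ 2 • (ContinuousLinearMap.adjoint K) (f - K g₀)) i)) := by
  set u := ContinuousLinearMap.adjoint K (f - K g₀)
  have hconv : ConvexOn ℝ univ fun g : EuclideanSpace ℝ (Fin N) => μ * ∑ i, |g i| :=
    ((convexOn_sum_abs (Fin N)).comp_linearMap
      (WithLp.linearEquiv 2 ℝ (Fin N → ℝ)).toLinearMap).smul hμ.le
  have hinner (g : EuclideanSpace ℝ (Fin N)) :
      2 * ⟪f - K g₀, K (g - g₀)⟫ = ∑ i, 2 * u i * (g i - g₀ i) := by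
    rw [← ContinuousLinearMap.adjoint_inner_left, PiLp.inner_apply, Finset.mul_sum]
    refine Finset.sum_congr rfl fun i _ => ?_
    simp only [RCLike.inner_apply, conj_trivial, PiLp.sub_apply]
    ring
  refine (forall_sq_norm_map_sub_add_le_iff hconv K.toLinearMap f g₀).trans ?_
  calc (∀ g, μ * ∑ i, |g₀ i| + 2 * ⟪f - K g₀, K (g - g₀)⟫ ≤ μ * ∑ i, |g i|)
      ↔ ∀ x : Fin N → ℝ, μ * ∑ i, |g₀ i| + ∑ i, 2 * u i * (x i - g₀ i) ≤ μ * ∑ i, |x i| := by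
        simp_rw [hinner]
        exact (WithLp.equiv 2 (Fin N → ℝ)).forall_congr_left
    _ ↔ ∀ i, |2 * u i| ≤ μ ∧ 2 * u i * g₀ i = μ * |g₀ i| :=
        forall_mul_sum_abs_add_sum_le_iff hμ.le
    _ ↔ ∀ i, g₀ i = softThreshold (c ^ 2 * μ) (g₀ i + c ^ 2 * u i) := forall_congr' fun i => by
        rw [show c ^ 2 * u i = c ^ 2 / 2 * (2 * u i) by ring,
          eq_softThreshold_mul_add_mul_iff hμ.le (by positivity)]
    _ ↔ _ := by
      rw [WithLp.ext_iff, funext_iff]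
      simp

/-- `g₀` minimizes `‖K g - f‖² + μ ‖g‖₁` if and only if `g₀` is a fixed point of the
soft-thresholding iteration map `g ↦ 𝐒_{c²μ}(g + c² Kᵀ (f - K g))`. -/
theorem minimizer_iff_fixed_point (N M : ℕ)
    (K : EuclideanSpace ℝ (Fin N) →L[ℝ] EuclideanSpace ℝ (Fin M))
    (f : EuclideanSpace ℝ (Fin M)) (μ c : ℝ) (hμ : 0 < μ) (hc : 0 < c)
    (hK : c * ‖K‖ < 1) (g₀ : EuclideanSpace ℝ (Fin N)) :
    (∀ g : EuclideanSpace ℝ (Fin N),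
        ‖K g₀ - f‖ ^ 2 + μ * ∑ i, |g₀ i| ≤ ‖K g - f‖ ^ 2 + μ * ∑ i, |g i|) ↔
      g₀ = (show EuclideanSpace ℝ (Fin N) from WithLp.toLp 2 fun i =>
        softThreshold (c ^ 2 * μ)
          ((g₀ + c ^ 2 • (ContinuousLinearMap.adjoint K) (f - K g₀)) i)) :=
  minimizer_iff_fixed_point_general N M K f μ c hμ hc g₀
end

section
/- Let K : ℝ^N → ℝ^M be a linear map, f ∈ ℝ^M, μ > 0, and c > 0 with c‖K‖ < 1 (operator norm with respect to Euclidean norms). For any initial guess g⁰ ∈ ℝ^N, the iterates defined by gⁿ = 𝐒_{c²μ}(g^{n−1} + c² K^T (f − K g^{n−1})), n = 1, 2, …, where 𝐒_λ is componentwise soft-thresholding with parameter λ, converge to a minimizer of the functional F(g) = ‖K g − f‖₂² + μ‖g‖₁, where ‖g‖₁ = Σ_i |g_i|. -/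
/-
The step `x ↦ 𝐒_{τμ}(x + τ Kᵀ(f - K x))`, with `τ = c²`, is a proximal-gradient step for
`Φ(g) = ‖K g - f‖² + μ ‖g‖₁`: componentwise, `𝐒_l v` is the proximal point of `l |·|` at `v`.
Combining the proximal inequality with the exact expansion of the quadratic part gives a
three-point inequality comparing `Φ` at the new iterate with `Φ` at an arbitrary point `z`.
When `τ ‖K‖² ≤ 1` it yields: `Φ` decreases by at least `‖gⁿ⁺¹ - gⁿ‖² / τ` per step, fixed
points of the step minimize `Φ`, and the step moves no point farther from a fixed point.
Since `μ ‖g‖ ≤ Φ(g)` the iterates are bounded, so a subsequence converges; its limit is a fixed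
point because the steps tend to zero, and Fejér monotonicity makes the whole sequence converge.
-/

open Real

open Filter Topology Function
open scoped RealInnerProductSpace

/-- `softThreshold l v` minimizes `z ↦ l |z| + (z - v)²`, with the strong-convexity margin
`(z - softThreshold l v)²`. -/
theorem softThreshold_prox {l : ℝ} (hl : 0 ≤ l) (v z : ℝ) :
    l * |softThreshold l v| + (softThreshold l v - v) ^ 2 + (z - softThreshold l v) ^ 2 ≤
      l * |z| + (z - v) ^ 2 := by
  unfold softThreshold
  split_ifs with h₁ h₂
  · rw [abs_of_nonpos (by linarith)]; cases abs_cases z <;> nlinarith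
  · simp only [abs_zero, mul_zero, zero_sub, even_two, Even.neg_pow, sub_zero, zero_add]
    cases abs_cases z <;> nlinarith
  · rw [abs_of_nonneg (by linarith)]; cases abs_cases z <;> nlinarith

theorem lipschitzWith_softThreshold {l : ℝ} (hl : 0 ≤ l) :
    LipschitzWith 1 (softThreshold l) := by
  refine LipschitzWith.of_dist_le_mul fun v w => ?_
  simp only [Real.dist_eq, NNReal.coe_one, one_mul]
  unfold softThreshold
  split_ifs <;> rw [abs_le] <;> constructor <;>
    linarith [le_abs_self (v - w), neg_abs_le (v - w)]

theorem mul_norm_apply_sq_le {E F : Type*} [SeminormedAddCommGroup E]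
    [SeminormedAddCommGroup F] [NormedSpace ℝ E] [NormedSpace ℝ F] (K : E →L[ℝ] F) {τ : ℝ}
    (hτ : 0 ≤ τ) (hK : τ * ‖K‖ ^ 2 ≤ 1) (x : E) : τ * ‖K x‖ ^ 2 ≤ ‖x‖ ^ 2 :=
  calc τ * ‖K x‖ ^ 2 ≤ τ * (‖K‖ * ‖x‖) ^ 2 := by gcongr; exact K.le_opNorm x
    _ = τ * ‖K‖ ^ 2 * ‖x‖ ^ 2 := by ring
    _ ≤ ‖x‖ ^ 2 := mul_le_of_le_one_left (sq_nonneg _) hK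

section FixedPoint

variable {X : Type*} [MetricSpace X] {T : X → X} {g : ℕ → X}

theorem isFixedPt_of_tendsto_subseq (hT : Continuous T) (hg : ∀ n, g (n + 1) = T (g n))
    (hreg : Tendsto (fun n => dist (g (n + 1)) (g n)) atTop (𝓝 0)) {φ : ℕ → ℕ}
    (hφ : StrictMono φ) {x : X} (hx : Tendsto (g ∘ φ) atTop (𝓝 x)) : IsFixedPt T x := by
  have hTx : Tendsto (fun k => g (φ k + 1)) atTop (𝓝 (T x)) := by
    simp only [hg]
    exact (hT.tendsto x).comp hx
  exact tendsto_nhds_unique (hTx.congr_dist (hreg.comp hφ.tendsto_atTop)) hx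

theorem tendsto_of_dist_antitone_of_tendsto_subseq {x : X}
    (hfejer : ∀ n, dist (g (n + 1)) x ≤ dist (g n) x) {φ : ℕ → ℕ}
    (hx : Tendsto (g ∘ φ) atTop (𝓝 x)) : Tendsto g atTop (𝓝 x) := by
  have hanti : Antitone fun n => dist (g n) x := antitone_nat_of_succ_le hfejer
  rw [Metric.tendsto_atTop] at hx ⊢
  intro ε hε
  obtain ⟨k, hk⟩ := hx ε hε
  exact ⟨φ k, fun n hn => (hanti hn).trans_lt (hk k le_rfl)⟩

theorem exists_isFixedPt_tendsto [ProperSpace X] (hT : Continuous T)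
    (hg : ∀ n, g (n + 1) = T (g n)) (hbdd : Bornology.IsBounded (Set.range g))
    (hreg : Tendsto (fun n => dist (g (n + 1)) (g n)) atTop (𝓝 0))
    (hfejer : ∀ x, IsFixedPt T x → ∀ y, dist (T y) x ≤ dist y x) :
    ∃ x, IsFixedPt T x ∧ Tendsto g atTop (𝓝 x) := by
  obtain ⟨x, -, φ, hφ, hx⟩ := tendsto_subseq_of_bounded hbdd (Set.mem_range_self ·)
  have hfix := isFixedPt_of_tendsto_subseq hT hg hreg hφ hx
  exact ⟨x, hfix, tendsto_of_dist_antitone_of_tendsto_subseq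
    (fun n => hg n ▸ hfejer x hfix (g n)) hx⟩

end FixedPoint

section Ista

variable {ι : Type*}

noncomputable def softThresholdVec (l : ℝ) (v : EuclideanSpace ℝ ι) : EuclideanSpace ℝ ι :=
  WithLp.toLp 2 fun i => softThreshold l (v i)

theorem continuous_softThresholdVec {l : ℝ} (hl : 0 ≤ l) :
    Continuous (softThresholdVec (ι := ι) l) :=
  (PiLp.continuous_toLp 2 _).comp <| continuous_pi fun i =>
    (lipschitzWith_softThreshold hl).continuous.comp (PiLp.continuous_apply 2 _ i)

variable [Fintype ι]

theorem EuclideanSpace.norm_le_sum_abs (x : EuclideanSpace ℝ ι) : ‖x‖ ≤ ∑ i, |x i| := by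
  refine le_of_sq_le_sq ?_ (by positivity)
  calc ‖x‖ ^ 2 = ∑ i, |x i| ^ 2 := by simp_rw [EuclideanSpace.real_norm_sq_eq, sq_abs]
    _ ≤ (∑ i, |x i|) ^ 2 := Finset.sum_sq_le_sq_sum_of_nonneg fun i _ => abs_nonneg _

theorem softThresholdVec_prox {l : ℝ} (hl : 0 ≤ l) (v z : EuclideanSpace ℝ ι) :
    l * ∑ i, |softThresholdVec l v i| + ‖softThresholdVec l v - v‖ ^ 2 +
        ‖z - softThresholdVec l v‖ ^ 2 ≤ l * ∑ i, |z i| + ‖z - v‖ ^ 2 := by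
  simp only [EuclideanSpace.real_norm_sq_eq, PiLp.sub_apply, Finset.mul_sum,
    ← Finset.sum_add_distrib]
  exact Finset.sum_le_sum fun i _ => softThreshold_prox hl (v i) (z i)

variable {F : Type*} [NormedAddCommGroup F] [InnerProductSpace ℝ F]
  (K : EuclideanSpace ℝ ι →L[ℝ] F) (f : F) {μ τ : ℝ}

variable (μ) in
noncomputable def lassoObjective (x : EuclideanSpace ℝ ι) : ℝ :=
  ‖K x - f‖ ^ 2 + μ * ∑ i, |x i|

theorem lassoObjective_nonneg (hμ : 0 ≤ μ) (x : EuclideanSpace ℝ ι) :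
    0 ≤ lassoObjective K f μ x := by
  unfold lassoObjective; positivity

theorem mul_norm_le_lassoObjective (hμ : 0 ≤ μ) (x : EuclideanSpace ℝ ι) :
    μ * ‖x‖ ≤ lassoObjective K f μ x :=
  calc μ * ‖x‖ ≤ μ * ∑ i, |x i| := mul_le_mul_of_nonneg_left (EuclideanSpace.norm_le_sum_abs x) hμ
    _ ≤ lassoObjective K f μ x := le_add_of_nonneg_left (sq_nonneg _)

variable [CompleteSpace F]

variable (μ τ) in
noncomputable def istaStep (x : EuclideanSpace ℝ ι) : EuclideanSpace ℝ ι :=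
  softThresholdVec (τ * μ) (x + τ • (ContinuousLinearMap.adjoint K) (f - K x))

theorem continuous_istaStep (hμ : 0 ≤ μ) (hτ : 0 ≤ τ) : Continuous (istaStep K f μ τ) :=
  (continuous_softThresholdVec (mul_nonneg hτ hμ)).comp <| continuous_id.add <|
    ((ContinuousLinearMap.adjoint K).continuous.comp
      (continuous_const.sub K.continuous)).const_smul τ

theorem istaStep_three_point (hμ : 0 ≤ μ) (hτ : 0 ≤ τ) (x z : EuclideanSpace ℝ ι) :
    τ * lassoObjective K f μ (istaStep K f μ τ x) + ‖z - istaStep K f μ τ x‖ ^ 2 +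
        (‖istaStep K f μ τ x - x‖ ^ 2 - τ * ‖K (istaStep K f μ τ x - x)‖ ^ 2) ≤
      τ * lassoObjective K f μ z + ‖z - x‖ ^ 2 - τ * ‖K (z - x)‖ ^ 2 := by
  set p := istaStep K f μ τ x
  set u := (ContinuousLinearMap.adjoint K) (f - K x)
  have hprox : τ * μ * ∑ i, |p i| + ‖p - (x + τ • u)‖ ^ 2 + ‖z - p‖ ^ 2 ≤
      τ * μ * ∑ i, |z i| + ‖z - (x + τ • u)‖ ^ 2 :=
    softThresholdVec_prox (mul_nonneg hτ hμ) (x + τ • u) z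
  have hgrad (y : EuclideanSpace ℝ ι) : ‖y - (x + τ • u)‖ ^ 2 =
      ‖y - x‖ ^ 2 + 2 * τ * ⟪K (y - x), K x - f⟫ + τ ^ 2 * ‖u‖ ^ 2 := by
    have hadj : ⟪y - x, u⟫ = -⟪K (y - x), K x - f⟫ := by
      rw [ContinuousLinearMap.adjoint_inner_right, ← inner_neg_right, neg_sub]
    rw [show y - (x + τ • u) = (y - x) - τ • u by abel, norm_sub_sq_real,
      real_inner_smul_right, hadj, norm_smul, mul_pow, Real.norm_eq_abs, sq_abs]
    ring
  have hquad (y : EuclideanSpace ℝ ι) : ‖K y - f‖ ^ 2 =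
      ‖K x - f‖ ^ 2 + 2 * ⟪K (y - x), K x - f⟫ + ‖K (y - x)‖ ^ 2 := by
    rw [show K y - f = (K x - f) + K (y - x) by rw [map_sub]; abel, norm_add_sq_real,
      real_inner_comm]
  rw [hgrad, hgrad] at hprox
  simp only [lassoObjective, hquad p, hquad z]
  linear_combination hprox

theorem lassoObjective_istaStep_le (hμ : 0 ≤ μ) (hτ : 0 ≤ τ) (hK : τ * ‖K‖ ^ 2 ≤ 1)
    (x : EuclideanSpace ℝ ι) :
    τ * lassoObjective K f μ (istaStep K f μ τ x) + ‖istaStep K f μ τ x - x‖ ^ 2 ≤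
      τ * lassoObjective K f μ x := by
  have h := istaStep_three_point K f hμ hτ x x
  have hd := mul_norm_apply_sq_le K hτ hK (istaStep K f μ τ x - x)
  simp only [sub_self, map_zero, norm_zero, ne_eq, OfNat.ofNat_ne_zero, not_false_eq_true,
    zero_pow, mul_zero, sub_zero, add_zero] at h
  rw [norm_sub_rev] at h
  linarith

theorem lassoObjective_le_of_isFixedPt (hμ : 0 ≤ μ) (hτ : 0 < τ) {x : EuclideanSpace ℝ ι}
    (hx : IsFixedPt (istaStep K f μ τ) x) (z : EuclideanSpace ℝ ι) :
    lassoObjective K f μ x ≤ lassoObjective K f μ z := by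
  have h := istaStep_three_point K f hμ hτ.le x z
  rw [hx.eq] at h
  simp only [sub_self, map_zero, norm_zero, ne_eq, OfNat.ofNat_ne_zero, not_false_eq_true,
    zero_pow, mul_zero, add_zero] at h
  have : 0 ≤ τ * ‖K (z - x)‖ ^ 2 := by positivity
  exact le_of_mul_le_mul_left (by linarith) hτ

theorem dist_istaStep_le_of_isFixedPt (hμ : 0 ≤ μ) (hτ : 0 < τ) (hK : τ * ‖K‖ ^ 2 ≤ 1)
    {x : EuclideanSpace ℝ ι} (hx : IsFixedPt (istaStep K f μ τ) x) (y : EuclideanSpace ℝ ι) :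
    dist (istaStep K f μ τ y) x ≤ dist y x := by
  have h := istaStep_three_point K f hμ hτ.le y x
  have hd := mul_norm_apply_sq_le K hτ.le hK (istaStep K f μ τ y - y)
  have hmin := mul_le_mul_of_nonneg_left
    (lassoObjective_le_of_isFixedPt K f hμ hτ hx (istaStep K f μ τ y)) hτ.le
  have : 0 ≤ τ * ‖K (x - y)‖ ^ 2 := by positivity
  rw [dist_eq_norm, dist_eq_norm, norm_sub_rev, norm_sub_rev y]
  exact (pow_le_pow_iff_left₀ (norm_nonneg _) (norm_nonneg _) two_ne_zero).mp (by linarith)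

section Orbit

variable {g : ℕ → EuclideanSpace ℝ ι}

theorem antitone_lassoObjective_orbit (hg : ∀ n, g (n + 1) = istaStep K f μ τ (g n))
    (hμ : 0 ≤ μ) (hτ : 0 < τ) (hK : τ * ‖K‖ ^ 2 ≤ 1) :
    Antitone fun n => lassoObjective K f μ (g n) := by
  refine antitone_nat_of_succ_le fun n => le_of_mul_le_mul_left ?_ hτ
  rw [hg]
  linarith [lassoObjective_istaStep_le K f hμ hτ.le hK (g n),
    sq_nonneg ‖istaStep K f μ τ (g n) - g n‖]

theorem isBounded_range_orbit (hg : ∀ n, g (n + 1) = istaStep K f μ τ (g n)) (hμ : 0 < μ)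
    (hτ : 0 < τ) (hK : τ * ‖K‖ ^ 2 ≤ 1) : Bornology.IsBounded (Set.range g) := by
  refine isBounded_iff_forall_norm_le.2 ⟨lassoObjective K f μ (g 0) / μ, ?_⟩
  rintro _ ⟨n, rfl⟩
  rw [le_div_iff₀' hμ]
  exact (mul_norm_le_lassoObjective K f hμ.le (g n)).trans
    (antitone_lassoObjective_orbit K f hg hμ.le hτ hK (Nat.zero_le n))

theorem tendsto_dist_succ_orbit (hg : ∀ n, g (n + 1) = istaStep K f μ τ (g n)) (hμ : 0 ≤ μ)
    (hτ : 0 < τ) (hK : τ * ‖K‖ ^ 2 ≤ 1) :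
    Tendsto (fun n => dist (g (n + 1)) (g n)) atTop (𝓝 0) := by
  have hanti := antitone_lassoObjective_orbit K f hg hμ hτ hK
  obtain ⟨L, hL⟩ : ∃ L, Tendsto (fun n => lassoObjective K f μ (g n)) atTop (𝓝 L) :=
    ⟨_, tendsto_atTop_ciInf hanti
      ⟨0, by rintro _ ⟨n, rfl⟩; exact lassoObjective_nonneg K f hμ _⟩⟩
  have hdecr : Tendsto (fun n => τ * lassoObjective K f μ (g n) -
      τ * lassoObjective K f μ (g (n + 1))) atTop (𝓝 0) := by
    simpa using (hL.const_mul τ).sub ((hL.comp (tendsto_add_atTop_nat 1)).const_mul τ)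
  have hsq : Tendsto (fun n => dist (g (n + 1)) (g n) ^ 2) atTop (𝓝 0) := by
    refine squeeze_zero (fun n => sq_nonneg _) (fun n => ?_) hdecr
    rw [dist_eq_norm, hg]
    linarith [lassoObjective_istaStep_le K f hμ hτ.le hK (g n)]
  simpa [Real.sqrt_sq dist_nonneg] using hsq.sqrt

end Orbit

end Ista

/-- The iterative soft-thresholding iterates
`gⁿ = 𝐒_{c²μ}(g^{n-1} + c² Kᵀ (f - K g^{n-1}))` converge to a minimizer of
`g ↦ ‖K g - f‖² + μ ‖g‖₁`. -/
theorem soft_thresholding_iteration_converges (N M : ℕ)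
    (K : EuclideanSpace ℝ (Fin N) →L[ℝ] EuclideanSpace ℝ (Fin M))
    (f : EuclideanSpace ℝ (Fin M)) (μ c : ℝ) (hμ : 0 < μ) (hc : 0 < c)
    (hK : c * ‖K‖ < 1) (g : ℕ → EuclideanSpace ℝ (Fin N))
    (hrec : ∀ n : ℕ, g (n + 1) = (show EuclideanSpace ℝ (Fin N) from WithLp.toLp 2 (fun i =>
      softThreshold (c ^ 2 * μ)
        ((g n + c ^ 2 • (ContinuousLinearMap.adjoint K) (f - K (g n))) i)))) :
    ∃ glim : EuclideanSpace ℝ (Fin N),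
      Filter.Tendsto g Filter.atTop (nhds glim) ∧
      ∀ h : EuclideanSpace ℝ (Fin N),
        ‖K glim - f‖ ^ 2 + μ * ∑ i, |glim i| ≤ ‖K h - f‖ ^ 2 + μ * ∑ i, |h i| := by
  have hτ : 0 < c ^ 2 := by positivity
  have hτK : c ^ 2 * ‖K‖ ^ 2 ≤ 1 := by
    rw [← mul_pow]; exact pow_le_one₀ (by positivity) hK.le
  have hg : ∀ n, g (n + 1) = istaStep K f μ (c ^ 2) (g n) := hrec
  obtain ⟨glim, hfix, hconv⟩ := exists_isFixedPt_tendsto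
    (continuous_istaStep K f hμ.le hτ.le) hg (isBounded_range_orbit K f hg hμ hτ hτK)
    (tendsto_dist_succ_orbit K f hg hμ.le hτ hτK)
    (fun _ hx => dist_istaStep_le_of_isFixedPt K f hμ.le hτ hτK hx)
  exact ⟨glim, hconv, lassoObjective_le_of_isFixedPt K f hμ.le hτ hfix⟩
end

section
/- Let f : ℝ² → ℝ be even in its second variable, continuous, and such that f̃(s,y) = f(√s, √y)/(2√y) extends to a continuous compactly supported function on (0,∞) × (0,∞). Let τ > 0 and q ∈ ℝ, and set θ = −arctan(q²) ∈ (−π/2, 0], ρ = log(τ² cos θ), and ρ'(θ') = ρ − log cos(θ − θ') for θ' ∈ (0, θ + π/2). Then the hyperbolic Radon transform admits the log-polar representation R_h f(τ,q) = 2 cos θ · ∫_0^{θ+π/2} f̃(e^{ρ'(θ')} cos θ', e^{ρ'(θ')} sin θ') · e^{2ρ'(θ') − ρ} dθ'. -/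
open Real MeasureTheory Set

set_option maxHeartbeats 1600000 in
/-- Log-polar representation of the hyperbolic Radon transform:
`R_h f (τ,q) = 2 cos θ ∫₀^{θ+π/2} f̃(e^{ρ'} cos θ', e^{ρ'} sin θ') e^{2ρ' - ρ} dθ'`,
where `θ = -arctan q²`, `ρ = log (τ² cos θ)` and `ρ'(θ') = ρ - log cos (θ - θ')`. -/
theorem hyperbolic_radon_logpolar (f : ℝ → ℝ → ℝ)
    (hf : Continuous fun p : ℝ × ℝ => f p.1 p.2)
    (heven : ∀ t x : ℝ, f t (-x) = f t x)
    (ftilde : ℝ → ℝ → ℝ)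
    (hftc : Continuous fun p : ℝ × ℝ => ftilde p.1 p.2)
    (hftsupp : HasCompactSupport fun p : ℝ × ℝ => ftilde p.1 p.2)
    (hftsub : tsupport (fun p : ℝ × ℝ => ftilde p.1 p.2) ⊆ Set.Ioi 0 ×ˢ Set.Ioi 0)
    (hft : ∀ s y : ℝ, 0 < s → 0 < y →
      ftilde s y = f (Real.sqrt s) (Real.sqrt y) / (2 * Real.sqrt y))
    (τ q : ℝ) (hτ : 0 < τ)
    (θ ρ : ℝ) (hθ : θ = -Real.arctan (q ^ 2)) (hρ : ρ = Real.log (τ ^ 2 * Real.cos θ))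
    (ρ' : ℝ → ℝ)
    (hρ' : ∀ θ' ∈ Set.Ioo 0 (θ + π / 2), ρ' θ' = ρ - Real.log (Real.cos (θ - θ'))) :
    (∫ x : ℝ, f (Real.sqrt (τ ^ 2 + q ^ 2 * x ^ 2)) x)
      = 2 * Real.cos θ * ∫ θ' in Set.Ioo (0 : ℝ) (θ + π / 2),
          ftilde (Real.exp (ρ' θ') * Real.cos θ') (Real.exp (ρ' θ') * Real.sin θ')
            * Real.exp (2 * ρ' θ' - ρ) := by
  -- basic range facts
  have hθ1 : -(π/2) < θ := by
    rw [hθ]; have := Real.arctan_lt_pi_div_two (q^2); linarith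
  have hθ2 : θ ≤ 0 := by
    rw [hθ]
    have h := Real.arctan_strictMono.monotone (sq_nonneg q)
    rw [Real.arctan_zero] at h
    linarith
  have hπ2 : (0:ℝ) < π/2 := by positivity
  have hcosθ : 0 < Real.cos θ :=
    Real.cos_pos_of_mem_Ioo ⟨hθ1, lt_of_le_of_lt hθ2 hπ2⟩
  set b : ℝ := θ + π/2 with hbdef
  have hb : 0 < b := by simp only [hbdef]; linarith
  have hτ2 : (0:ℝ) < τ^2 := by positivity
  have heρ : Real.exp ρ = τ^2 * Real.cos θ := by
    rw [hρ, Real.exp_log (by positivity)]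
  have htan : Real.tan θ = -(q^2) := by rw [hθ, Real.tan_neg, Real.tan_arctan]
  have hq2 : q^2 * Real.cos θ = -Real.sin θ := by
    have h := Real.tan_mul_cos (ne_of_gt hcosθ)
    rw [htan] at h; linarith
  have hcosd : ∀ t : ℝ, 0 ≤ t → t < b → 0 < Real.cos (θ - t) := by
    intro t h1 h2
    apply Real.cos_pos_of_mem_Ioo
    constructor
    · simp only [hbdef] at h2; linarith
    · linarith
  -- the diffeo Y
  set Y : ℝ → ℝ := fun t => Real.exp ρ * Real.sin t / Real.cos (θ - t) with hYdef
  have hYd : ∀ t : ℝ, Real.cos (θ - t) ≠ 0 →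
      HasDerivAt Y (Real.exp ρ * Real.cos θ / (Real.cos (θ - t))^2) t := by
    intro t ht
    have hu : HasDerivAt (fun t => Real.exp ρ * Real.sin t) (Real.exp ρ * Real.cos t) t :=
      (Real.hasDerivAt_sin t).const_mul _
    have hv : HasDerivAt (fun t => Real.cos (θ - t)) (Real.sin (θ - t)) t := by
      have h1 : HasDerivAt (fun t : ℝ => θ - t) (-1) t := (hasDerivAt_id t).const_sub θ
      have := h1.cos
      convert this using 1; ring
    have := hu.div hv ht
    refine this.congr_deriv ?_
    have hc : Real.cos θ = Real.cos (θ - t) * Real.cos t - Real.sin (θ - t) * Real.sin t := by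
      rw [← Real.cos_add]; ring_nf
    rw [hc]; ring
  have hYpos : ∀ t ∈ Set.Ioo (0:ℝ) b, 0 < Y t := by
    intro t ht
    have h2 := ht.2
    rw [hbdef] at h2
    have hπ := Real.pi_gt_three
    have hsin : 0 < Real.sin t := Real.sin_pos_of_pos_of_lt_pi ht.1 (by linarith)
    exact div_pos (mul_pos (Real.exp_pos _) hsin) (hcosd t ht.1.le ht.2)
  have hYcont : ContinuousOn Y (Set.Ioo 0 b) := by
    apply ContinuousOn.div
    · fun_prop
    · fun_prop
    · exact fun t ht => ne_of_gt (hcosd t ht.1.le ht.2)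
  have hYmono : StrictMonoOn Y (Set.Ioo 0 b) := by
    apply strictMonoOn_of_deriv_pos (convex_Ioo 0 b) hYcont
    intro t ht
    rw [interior_Ioo] at ht
    rw [(hYd t (ne_of_gt (hcosd t ht.1.le ht.2))).deriv]
    have := hcosd t ht.1.le ht.2
    positivity
  have hYimg : Y '' Set.Ioo 0 b = Set.Ioi 0 := by
    apply Set.Subset.antisymm
    · rintro _ ⟨t, ht, rfl⟩; exact hYpos t ht
    · intro c hc
      have hc0 : 0 < c := hc
      have hsinθ : Real.sin θ ≤ 0 :=
        Real.sin_nonpos_of_nonpos_of_neg_pi_le hθ2 (by have := Real.pi_gt_three; linarith)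
      have hden : 0 < Real.exp ρ - c * Real.sin θ := by
        have : 0 ≤ c * (-Real.sin θ) := mul_nonneg hc0.le (by linarith)
        have := Real.exp_pos ρ; nlinarith
      set A : ℝ := c * Real.cos θ / (Real.exp ρ - c * Real.sin θ) with hAdef
      have hA0 : 0 < A := div_pos (mul_pos hc0 hcosθ) hden
      set t : ℝ := Real.arctan A with htdef
      have ht0 : 0 < t := by
        rw [htdef, ← Real.arctan_zero]
        exact Real.arctan_strictMono hA0
      have htlt : t < b := by
        rcases eq_or_lt_of_le hθ2 with h0 | hneg
        · have := Real.arctan_lt_pi_div_two A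
          simp only [hbdef, ← h0]; linarith
        · have hsinneg : Real.sin θ < 0 := by
            apply Real.sin_neg_of_neg_of_neg_pi_lt hneg
            have := Real.pi_gt_three; linarith
          have hbmem : b ∈ Set.Ioo (-(π/2)) (π/2) := by
            constructor
            · simp only [hbdef]; linarith
            · simp only [hbdef]; linarith
          have htanb : Real.tan b = Real.cos θ / (-Real.sin θ) := by
            rw [Real.tan_eq_sin_div_cos]
            simp only [hbdef]
            rw [Real.sin_add, Real.cos_add, Real.sin_pi_div_two, Real.cos_pi_div_two]
            ring_nf
          have hAlt : A < Real.tan b := by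
            rw [htanb, hAdef, div_lt_div_iff₀ hden (by linarith)]
            have := Real.exp_pos ρ
            nlinarith
          calc t = Real.arctan A := htdef
            _ < Real.arctan (Real.tan b) := Real.arctan_strictMono hAlt
            _ = b := Real.arctan_tan hbmem.1 hbmem.2
      refine ⟨t, ⟨ht0, htlt⟩, ?_⟩
      have hcost : 0 < Real.cos t := Real.cos_arctan A ▸ by positivity
      have htant : Real.tan t = A := Real.tan_arctan A
      have hsint : Real.sin t * (Real.exp ρ - c * Real.sin θ) = c * Real.cos θ * Real.cos t := by
        have h := Real.tan_mul_cos (ne_of_gt hcost)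
        rw [htant, hAdef] at h
        field_simp at h
        linarith [h]
      have hcosne : Real.cos (θ - t) ≠ 0 := ne_of_gt (hcosd t ht0.le htlt)
      show Real.exp ρ * Real.sin t / Real.cos (θ - t) = c
      rw [div_eq_iff hcosne, Real.cos_sub]
      nlinarith [hsint]
  -- the line identity
  have hexpρ' : ∀ t ∈ Set.Ioo (0:ℝ) b, Real.exp (ρ' t) = Real.exp ρ / Real.cos (θ - t) := by
    intro t ht
    rw [hρ' t ht, Real.exp_sub, Real.exp_log (hcosd t ht.1.le ht.2)]
  have hline : ∀ t ∈ Set.Ioo (0:ℝ) b,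
      τ^2 + q^2 * Y t = Real.exp ρ * Real.cos t / Real.cos (θ - t) := by
    intro t ht
    have hcos : Real.cos (θ - t) ≠ 0 := ne_of_gt (hcosd t ht.1.le ht.2)
    have hτ2e : τ^2 = Real.exp ρ / Real.cos θ := by
      rw [heρ]; field_simp
    have hcs : Real.cos (θ - t) = Real.cos θ * Real.cos t + Real.sin θ * Real.sin t :=
      Real.cos_sub θ t
    show τ^2 + q^2 * (Real.exp ρ * Real.sin t / Real.cos (θ - t)) = _
    rw [eq_div_iff hcos, add_mul, mul_assoc (q^2), div_mul_cancel₀ _ hcos]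
    linear_combination τ^2 * hcs + τ^2 * Real.sin t * hq2 + (q^2 * Real.sin t - Real.cos t) * heρ
  -- support bound
  obtain ⟨R, hR⟩ : ∃ R, tsupport (fun p : ℝ × ℝ => ftilde p.1 p.2) ⊆ Metric.closedBall 0 R :=
    (Metric.isBounded_iff_subset_closedBall 0).mp hftsupp.isBounded
  set M : ℝ := max R 0 with hMdef
  have hM0 : (0:ℝ) ≤ M := le_max_right _ _
  have hftzero : ∀ s y : ℝ, M < y → ftilde s y = 0 := by
    intro s y hy
    have : (s, y) ∉ tsupport (fun p : ℝ × ℝ => ftilde p.1 p.2) := by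
      intro hmem
      have h1 := hR hmem
      rw [Metric.mem_closedBall, dist_zero_right] at h1
      have h2 : |y| ≤ ‖((s, y) : ℝ × ℝ)‖ := by
        simpa using norm_snd_le ((s, y) : ℝ × ℝ)
      have : M < ‖((s,y) : ℝ × ℝ)‖ := lt_of_lt_of_le (lt_of_lt_of_le hy (le_abs_self y)) h2
      have : R < ‖((s,y) : ℝ × ℝ)‖ := lt_of_le_of_lt (le_max_left R 0) this
      linarith
    exact image_eq_zero_of_notMem_tsupport (f := fun p : ℝ × ℝ => ftilde p.1 p.2) this
  have hspos : ∀ x : ℝ, 0 < τ^2 + q^2 * x^2 := by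
    intro x
    have : 0 ≤ q^2 * x^2 := by positivity
    linarith
  have hgpos : ∀ x : ℝ, 0 < x →
      f (Real.sqrt (τ^2 + q^2*x^2)) x = 2*x * ftilde (τ^2 + q^2*x^2) (x^2) := by
    intro x hx
    have hy : (0:ℝ) < x^2 := by positivity
    have h := hft (τ^2 + q^2*x^2) (x^2) (hspos x) hy
    rw [Real.sqrt_sq hx.le] at h
    rw [h]
    field_simp
  have hgzero : ∀ x : ℝ, Real.sqrt M + 1 ≤ |x| →
      f (Real.sqrt (τ^2 + q^2*x^2)) x = 0 := by
    have hpos : ∀ x : ℝ, Real.sqrt M + 1 ≤ x → f (Real.sqrt (τ^2 + q^2*x^2)) x = 0 := by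
      intro x hx
      have hx0 : 0 < x := lt_of_lt_of_le (by positivity) hx
      have hMx : M < x^2 := by
        nlinarith [Real.sq_sqrt hM0, Real.sqrt_nonneg M]
      rw [hgpos x hx0, hftzero _ _ hMx, mul_zero]
    intro x hx
    rcases abs_cases x with ⟨h1, _⟩ | ⟨h1, _⟩
    · exact hpos x (h1 ▸ hx)
    · have hxneg : Real.sqrt M + 1 ≤ -x := h1 ▸ hx
      have he : f (Real.sqrt (τ^2 + q^2*x^2)) x
          = f (Real.sqrt (τ^2 + q^2*(-x)^2)) (-x) := by
        have hxx : τ^2 + q^2*(-x)^2 = τ^2 + q^2*x^2 := by ring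
        rw [hxx, heven]
      rw [he]
      exact hpos (-x) hxneg
  have hgc : Continuous (fun x : ℝ => f (Real.sqrt (τ^2 + q^2*x^2)) x) := by
    have : Continuous fun x : ℝ => ((Real.sqrt (τ^2 + q^2*x^2), x) : ℝ × ℝ) :=
      (Real.continuous_sqrt.comp (by fun_prop)).prodMk continuous_id
    exact hf.comp this
  have hgsupp : HasCompactSupport (fun x : ℝ => f (Real.sqrt (τ^2 + q^2*x^2)) x) := by
    apply HasCompactSupport.intro (isCompact_Icc
      (a := -(Real.sqrt M + 1)) (b := Real.sqrt M + 1))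
    intro x hx
    apply hgzero
    simp only [Set.mem_Icc, not_and_or, not_le] at hx
    rcases hx with h | h
    · rw [abs_of_neg (by linarith [Real.sqrt_nonneg M])]; linarith
    · rw [abs_of_pos (by linarith [Real.sqrt_nonneg M])]; linarith
  have hgint : Integrable (fun x : ℝ => f (Real.sqrt (τ^2 + q^2*x^2)) x) :=
    hgc.integrable_of_hasCompactSupport hgsupp
  -- Step A: evenness
  have hA : (∫ x : ℝ, f (Real.sqrt (τ^2 + q^2*x^2)) x)
      = 2 * ∫ x in Set.Ioi (0:ℝ), f (Real.sqrt (τ^2 + q^2*x^2)) x := by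
    rw [← intervalIntegral.integral_Iic_add_Ioi (hgint.integrableOn) (hgint.integrableOn)]
    have hneg : (∫ x in Set.Iic (0:ℝ), f (Real.sqrt (τ^2 + q^2*x^2)) x)
        = ∫ x in Set.Ioi (0:ℝ), f (Real.sqrt (τ^2 + q^2*x^2)) x := by
      rw [show Set.Iic (0:ℝ) = Set.Iic (-(0:ℝ)) by norm_num,
        ← integral_comp_neg_Ioi]
      refine setIntegral_congr_fun measurableSet_Ioi fun x _ => ?_
      have h2 : (-x)^2 = x^2 := by ring
      rw [h2, heven]
    rw [hneg]; ring
  -- Step B: substitution y = x^2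
  have hsqimg : (fun x : ℝ => x^2) '' Set.Ioi 0 = Set.Ioi (0:ℝ) := by
    ext y
    simp only [Set.mem_image, Set.mem_Ioi]
    constructor
    · rintro ⟨x, hx, rfl⟩; positivity
    · intro hy; exact ⟨Real.sqrt y, Real.sqrt_pos.mpr hy, Real.sq_sqrt hy.le⟩
  have hB : (∫ y in Set.Ioi (0:ℝ), ftilde (τ^2 + q^2*y) y)
      = ∫ x in Set.Ioi (0:ℝ), f (Real.sqrt (τ^2 + q^2*x^2)) x := by
    have hinj : Set.InjOn (fun x : ℝ => x^2) (Set.Ioi 0) := by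
      intro a ha b hb h
      simp only [Set.mem_Ioi] at ha hb
      simp only at h
      nlinarith
    have hderiv : ∀ x ∈ Set.Ioi (0:ℝ),
        HasDerivWithinAt (fun x : ℝ => x^2) ((fun x : ℝ => 2*x) x) (Set.Ioi 0) x := by
      intro x _
      simpa using (hasDerivAt_pow 2 x).hasDerivWithinAt
    have h1 : (∫ y in Set.Ioi (0:ℝ), ftilde (τ^2 + q^2*y) y)
        = ∫ x in Set.Ioi (0:ℝ), |2*x| • ftilde (τ^2 + q^2*x^2) (x^2) := by
      conv_lhs => rw [← hsqimg]
      exact integral_image_eq_integral_abs_deriv_smul measurableSet_Ioi hderiv hinj _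
    rw [h1]
    refine setIntegral_congr_fun measurableSet_Ioi fun x hx => ?_
    simp only [Set.mem_Ioi] at hx
    rw [smul_eq_mul, abs_of_pos (by linarith), hgpos x hx]
  -- Step C: substitution y = Y t
  have hC : (∫ y in Set.Ioi (0:ℝ), ftilde (τ^2 + q^2*y) y)
      = ∫ t in Set.Ioo (0:ℝ) b, |Real.exp ρ * Real.cos θ / (Real.cos (θ - t))^2|
          • ftilde (τ^2 + q^2 * Y t) (Y t) := by
    rw [← hYimg]
    exact integral_image_eq_integral_abs_deriv_smul measurableSet_Ioo
      (fun t ht => (hYd t (ne_of_gt (hcosd t ht.1.le ht.2))).hasDerivWithinAt)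
      hYmono.injOn _
  -- pointwise identification on Ioo
  have hpt : ∀ t ∈ Set.Ioo (0:ℝ) b,
      |Real.exp ρ * Real.cos θ / (Real.cos (θ - t))^2| • ftilde (τ^2 + q^2 * Y t) (Y t)
      = Real.cos θ * (ftilde (Real.exp (ρ' t) * Real.cos t) (Real.exp (ρ' t) * Real.sin t)
          * Real.exp (2 * ρ' t - ρ)) := by
    intro t ht
    have hC0 : 0 < Real.cos (θ - t) := hcosd t ht.1.le ht.2
    have h1 : Real.exp (ρ' t) = Real.exp ρ / Real.cos (θ - t) := hexpρ' t ht
    have h2 : Real.exp (2 * ρ' t - ρ) = Real.exp ρ / (Real.cos (θ - t))^2 := by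
      rw [hρ' t ht, show 2*(ρ - Real.log (Real.cos (θ - t))) - ρ
          = ρ - Real.log ((Real.cos (θ - t))^2) by rw [Real.log_pow]; push_cast; ring,
        Real.exp_sub, Real.exp_log (by positivity)]
    have h3 : Real.exp (ρ' t) * Real.cos t = τ^2 + q^2 * Y t := by
      rw [h1, hline t ht]; ring
    have h4 : Real.exp (ρ' t) * Real.sin t = Y t := by
      rw [h1]
      show _ = Real.exp ρ * Real.sin t / Real.cos (θ - t)
      ring
    rw [h3, h4, h2, smul_eq_mul, abs_of_pos (by positivity)]
    ring
  -- assemble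
  rw [hA, ← hB, hC]
  rw [setIntegral_congr_fun measurableSet_Ioo hpt, integral_const_mul]
  ring
end
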